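/- arXiv:1404.2841 — 9 statements merged into one kernel-verified Lean document; each statement's English description precedes it below -/
import Mathlib

section
/- If a00·a11 - a01·a10 ≠ 0, all entries a00, a01, a10, a11 are nonzero, p00 ≠ p10 and p01 ≠ p11, then there is no point (x,y) ∈ ℝ² at which both the Jacobian determinant of G vanishes and (a00·a11 - a01·a10)x + (-a00·a11·p00 + a01·a10·p10) = 0. -/
/-! The line equation says `a00 a11 (x - p00) = a01 a10 (x - p10)`. Substituting this into
`det JG = 0` leaves `a00 a11 (x - p00) (p01 - p11) = 0`, while `x = p00` would force `x = p10`. -/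

theorem eq_of_mul_eq_of_mul_mul_eq {R : Type*} [CommRing R] [NoZeroDivisors R] {α β u v w z : R}
    (hα : α ≠ 0) (hβ : β ≠ 0) (huv : u ≠ v) (h : α * u = β * v)
    (h' : α * u * w = β * v * z) : w = z := by
  have hu : u ≠ 0 := by
    rintro rfl
    have hv : v = 0 := (mul_eq_zero.mp (by rw [← h, mul_zero])).resolve_left hβ
    exact huv hv.symm
  rw [← h] at h'
  exact mul_left_cancel₀ (mul_ne_zero hα hu) h'

theorem no_common_zero_of_detJG_and_line_general
    (a00 a01 a10 a11 p00 p01 p10 p11 : ℝ)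
    (h00 : a00 ≠ 0) (h01 : a01 ≠ 0) (h10 : a10 ≠ 0) (h11 : a11 ≠ 0)
    (hp0 : p00 ≠ p10) (hp1 : p01 ≠ p11) :
    ¬ ∃ x y : ℝ,
      4 * (a00 * (x - p00) * (a11 * (y - p11)) - a01 * (y - p01) * (a10 * (x - p10))) = 0 ∧
      (a00 * a11 - a01 * a10) * x + (-(a00 * a11 * p00) + a01 * a10 * p10) = 0 := by
  rintro ⟨x, y, hJ, hL⟩
  have hy : y - p11 = y - p01 :=
    eq_of_mul_eq_of_mul_mul_eq (u := x - p00) (v := x - p10) (mul_ne_zero h00 h11)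
      (mul_ne_zero h01 h10) (sub_right_injective.ne hp0) (by linear_combination hL)
      (by linear_combination hJ / 4)
  exact hp1 (sub_right_injective hy).symm

/-- If `a00a11 - a01a10 ≠ 0`, all entries nonzero, `p00 ≠ p10` and `p01 ≠ p11`, there is
no point where both the Jacobian determinant of `G` vanishes and
`(a00a11 - a01a10)x + (-a00a11p00 + a01a10p10) = 0`. -/
theorem no_common_zero_of_detJG_and_line
    (a00 a01 a10 a11 p00 p01 p10 p11 : ℝ)
    (h00 : a00 ≠ 0) (h01 : a01 ≠ 0) (h10 : a10 ≠ 0) (h11 : a11 ≠ 0)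
    (hdet : a00 * a11 - a01 * a10 ≠ 0) (hp0 : p00 ≠ p10) (hp1 : p01 ≠ p11) :
    ¬ ∃ x y : ℝ,
      4 * (a00 * (x - p00) * (a11 * (y - p11)) - a01 * (y - p01) * (a10 * (x - p10))) = 0 ∧
      (a00 * a11 - a01 * a10) * x + (-(a00 * a11 * p00) + a01 * a10 * p10) = 0 :=
  no_common_zero_of_detJG_and_line_general a00 a01 a10 a11 p00 p01 p10 p11 h00 h01 h10 h11 hp0 hp1
end

section
/- Under the stated hypotheses, the gradient of the Jacobian determinant function det JG: ℝ² → ℝ is nonzero at every point of the singular set S(G) = {(x,y) : det JG(x,y) = 0}; in particular the singular set is a regular level set. -/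
/-!
Write `A = a00 a11`, `B = a01 a10`. At a singular point `(x, y)` where the partial derivative
`∂_y det JG = 4 (A (x - p00) - B (x - p10))` also vanishes, substituting `A (x - p00) = B (x - p10)`
into `det JG = 0` leaves `B (x - p10) (p01 - p11) = 0`, so `x = p10`; then `∂_y det JG = 0` reads
`A (p10 - p00) = 0`, contradicting `p00 ≠ p10`. Hence not even this one partial derivative vanishes.
-/

/-- `det JG` with `A = a00 a11`, `B = a01 a10` and `(a, b, c, d) = (p00, p01, p10, p11)`. -/
def jacDet (A B a b c d : ℝ) (q : ℝ × ℝ) : ℝ :=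
  4 * (A * (q.1 - a) * (q.2 - d) - B * (q.2 - b) * (q.1 - c))

theorem HasFDerivAt.hasDerivAt_slice_right {𝕜 E F : Type*} [NontriviallyNormedField 𝕜]
    [NormedAddCommGroup E] [NormedSpace 𝕜 E] [NormedAddCommGroup F] [NormedSpace 𝕜 F]
    {f : E × 𝕜 → F} {f' : E × 𝕜 →L[𝕜] F} {p : E × 𝕜} (hf : HasFDerivAt f f' p) :
    HasDerivAt (fun y => f (p.1, y)) (f' (0, 1)) p.2 :=
  hf.comp_hasDerivAt (f := fun y => (p.1, y)) p.2 ((hasDerivAt_const _ _).prodMk (hasDerivAt_id _))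

theorem hasDerivAt_jacDet_slice_right (A B a b c d x y : ℝ) :
    HasDerivAt (fun y => jacDet A B a b c d (x, y)) (4 * (A * (x - a) - B * (x - c))) y := by
  have hlin : HasDerivAt (fun y => (4 * (A * (x - a) - B * (x - c))) * y
      + 4 * (B * b * (x - c) - A * d * (x - a))) (4 * (A * (x - a) - B * (x - c))) y :=
    ((hasDerivAt_id y).const_mul _).add_const _ |>.congr_deriv (mul_one _)
  convert hlin using 1
  funext y
  simp only [jacDet]
  ring

theorem differentiable_jacDet (A B a b c d : ℝ) : Differentiable ℝ (jacDet A B a b c d) := by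
  unfold jacDet
  fun_prop

theorem jacDet_partial_snd_ne_zero_of_eq_zero {A B a b c d : ℝ} (hA : A ≠ 0) (hB : B ≠ 0)
    (hac : a ≠ c) (hbd : b ≠ d) {q : ℝ × ℝ} (hq : jacDet A B a b c d q = 0) :
    4 * (A * (q.1 - a) - B * (q.1 - c)) ≠ 0 := by
  intro hy
  have hx : B * (q.1 - c) * (b - d) = 0 := by
    simp only [jacDet] at hq
    linear_combination hq / 4 - (q.2 - d) * hy / 4
  have hxc : q.1 = c := by
    simpa [hB, sub_eq_zero, hbd] using hx
  have : A * (c - a) = 0 := by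
    rw [hxc] at hy
    linear_combination hy / 4
  simp [hA, sub_eq_zero, hac.symm] at this

theorem fderiv_jacDet_ne_zero {A B a b c d : ℝ} (hA : A ≠ 0) (hB : B ≠ 0)
    (hac : a ≠ c) (hbd : b ≠ d) {q : ℝ × ℝ} (hq : jacDet A B a b c d q = 0) :
    fderiv ℝ (jacDet A B a b c d) q ≠ 0 := by
  intro h
  have hslice := ((differentiable_jacDet A B a b c d q).hasFDerivAt).hasDerivAt_slice_right
  rw [h] at hslice
  exact jacDet_partial_snd_ne_zero_of_eq_zero hA hB hac hbd hq
    ((hasDerivAt_jacDet_slice_right A B a b c d q.1 q.2).unique hslice)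

theorem grad_detJG_ne_zero_on_singular_set_general
    (a00 a01 a10 a11 p00 p01 p10 p11 : ℝ)
    (h00 : a00 ≠ 0) (h01 : a01 ≠ 0) (h10 : a10 ≠ 0) (h11 : a11 ≠ 0)
    (hp0 : p00 ≠ p10) (hp1 : p01 ≠ p11) :
    ∀ p : ℝ × ℝ,
      (4 * (a00 * a11 * (p.1 - p00) * (p.2 - p11) - a01 * a10 * (p.2 - p01) * (p.1 - p10)) = 0) →
      fderiv ℝ (fun q : ℝ × ℝ =>
        4 * (a00 * a11 * (q.1 - p00) * (q.2 - p11) - a01 * a10 * (q.2 - p01) * (q.1 - p10))) p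
        ≠ 0 :=
  fun _ hp => fderiv_jacDet_ne_zero (mul_ne_zero h00 h11) (mul_ne_zero h01 h10) hp0 hp1 hp

/-- The gradient (total derivative) of the Jacobian-determinant function
`detJG(x,y) = 4(a00a11(x-p00)(y-p11) - a01a10(y-p01)(x-p10))` is nonzero at every point of
the singular set `{(x,y) : detJG(x,y) = 0}`; the singular set is a regular level set. -/
theorem grad_detJG_ne_zero_on_singular_set
    (a00 a01 a10 a11 p00 p01 p10 p11 : ℝ)
    (h00 : a00 ≠ 0) (h01 : a01 ≠ 0) (h10 : a10 ≠ 0) (h11 : a11 ≠ 0)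
    (hdet : a00 * a11 - a01 * a10 ≠ 0) (hp0 : p00 ≠ p10) (hp1 : p01 ≠ p11) :
    ∀ p : ℝ × ℝ,
      (4 * (a00 * a11 * (p.1 - p00) * (p.2 - p11) - a01 * a10 * (p.2 - p01) * (p.1 - p10)) = 0) →
      fderiv ℝ (fun q : ℝ × ℝ =>
        4 * (a00 * a11 * (q.1 - p00) * (q.2 - p11) - a01 * a10 * (q.2 - p01) * (q.1 - p10))) p
        ≠ 0 :=
  grad_detJG_ne_zero_on_singular_set_general a00 a01 a10 a11 p00 p01 p10 p11 h00 h01 h10 h11 hp0 hp1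
end

section
/- Under the stated hypotheses, the singular set of G is the graph of the function φ(x) = -((-a00·a11·p11 + a01·a10·p01)x + (a00·a11·p00·p11 - a01·a10·p01·p10)) / ((a00·a11 - a01·a10)x + (-a00·a11·p00 + a01·a10·p10)), defined on the set where the denominator is nonzero; that is, (x,y) satisfies det JG(x,y) = 0 if and only if the denominator (a00·a11 - a01·a10)x + (-a00·a11·p00 + a01·a10·p10) is nonzero and y = φ(x). -/
/-!
The Jacobian determinant is affine in `y`, `D(x) * y + N(x)`, with `D` and `N` affine in `x`,
so `det JG = 0` reads `y = -N(x)/D(x)` as soon as `D` and `N` have no common zero. They have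
none because their resultant is `a00 a11 a01 a10 (p00 - p10)(p01 - p11) ≠ 0`.
-/

theorem mul_add_eq_zero_iff_eq_neg_div {K : Type*} [Field K] {a b y : K}
    (hab : a = 0 → b ≠ 0) : a * y + b = 0 ↔ a ≠ 0 ∧ y = -(b / a) := by
  constructor
  · intro h
    have ha : a ≠ 0 := fun ha => hab ha (by simpa [ha] using h)
    refine ⟨ha, ?_⟩
    rw [← neg_div, eq_div_iff ha]
    linear_combination h
  · rintro ⟨ha, rfl⟩
    field_simp
    ring

theorem add_ne_zero_of_resultant_ne_zero {R : Type*} [CommRing R] {α β γ δ x : R}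
    (hres : α * δ - β * γ ≠ 0) (hx : α * x + β = 0) : γ * x + δ ≠ 0 := fun hx' =>
  hres (by linear_combination α * hx' - γ * hx)

section SingularSet

variable {R : Type*} [CommRing R] (u v p00 p01 p10 p11 x y : R)

theorem jacobian_det_eq_denom_mul_add_numer :
    u * (x - p00) * (y - p11) - v * (y - p01) * (x - p10) =
      ((u - v) * x + (-(u * p00) + v * p10)) * y +
        ((-(u * p11) + v * p01) * x + (u * p00 * p11 - v * p01 * p10)) := by
  ring

theorem singular_resultant_eq :
    (u - v) * (u * p00 * p11 - v * p01 * p10) - (-(u * p00) + v * p10) * (-(u * p11) + v * p01) =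
      u * v * (p00 - p10) * (p01 - p11) := by
  ring

end SingularSet

theorem singular_set_is_graph_general
    (a00 a01 a10 a11 p00 p01 p10 p11 : ℝ)
    (h00 : a00 ≠ 0) (h01 : a01 ≠ 0) (h10 : a10 ≠ 0) (h11 : a11 ≠ 0)
    (hp0 : p00 ≠ p10) (hp1 : p01 ≠ p11) :
    ∀ x y : ℝ,
      (4 * (a00 * a11 * (x - p00) * (y - p11) - a01 * a10 * (y - p01) * (x - p10)) = 0) ↔
      ((a00 * a11 - a01 * a10) * x + (-(a00 * a11 * p00) + a01 * a10 * p10) ≠ 0 ∧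
        y = -(((-(a00 * a11 * p11) + a01 * a10 * p01) * x +
                (a00 * a11 * p00 * p11 - a01 * a10 * p01 * p10)) /
              ((a00 * a11 - a01 * a10) * x + (-(a00 * a11 * p00) + a01 * a10 * p10)))) := by
  intro x y
  have hres : (a00 * a11 - a01 * a10) * (a00 * a11 * p00 * p11 - a01 * a10 * p01 * p10) -
      (-(a00 * a11 * p00) + a01 * a10 * p10) * (-(a00 * a11 * p11) + a01 * a10 * p01) ≠ 0 := by
    rw [singular_resultant_eq]
    simp [*, sub_eq_zero]
  rw [mul_eq_zero_iff_left four_ne_zero, jacobian_det_eq_denom_mul_add_numer]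
  exact mul_add_eq_zero_iff_eq_neg_div (add_ne_zero_of_resultant_ne_zero hres)

/-- The singular set of `G` is the graph of
`φ(x) = -((-a00a11p11 + a01a10p01)x + (a00a11p00p11 - a01a10p01p10)) /
        ((a00a11 - a01a10)x + (-a00a11p00 + a01a10p10))`:
`detJG(x,y) = 0` iff the denominator is nonzero and `y = φ(x)`. -/
theorem singular_set_is_graph
    (a00 a01 a10 a11 p00 p01 p10 p11 : ℝ)
    (h00 : a00 ≠ 0) (h01 : a01 ≠ 0) (h10 : a10 ≠ 0) (h11 : a11 ≠ 0)
    (hdet : a00 * a11 - a01 * a10 ≠ 0) (hp0 : p00 ≠ p10) (hp1 : p01 ≠ p11) :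
    ∀ x y : ℝ,
      (4 * (a00 * a11 * (x - p00) * (y - p11) - a01 * a10 * (y - p01) * (x - p10)) = 0) ↔
      ((a00 * a11 - a01 * a10) * x + (-(a00 * a11 * p00) + a01 * a10 * p10) ≠ 0 ∧
        y = -(((-(a00 * a11 * p11) + a01 * a10 * p01) * x +
                (a00 * a11 * p00 * p11 - a01 * a10 * p01 * p10)) /
              ((a00 * a11 - a01 * a10) * x + (-(a00 * a11 * p00) + a01 * a10 * p10)))) :=
  singular_set_is_graph_general a00 a01 a10 a11 p00 p01 p10 p11 h00 h01 h10 h11 hp0 hp1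
end

section
/- Under the stated hypotheses, the derivative with respect to x of the composition x ↦ G(x, φ(x)) vanishes at exactly one point, namely x̃ = ((a00·a01²·a10·a11²(p00-p10)(p01-p11)²)^(1/3) + (a00·a11·p00 - a01·a10·p10))/(a00·a11 - a01·a10). -/
/-!
On the domain of `φ` the curve is the Möbius map `φ x = p01 - a00 a11 (p01 - p11) (x - p00) / D x`
with `D x = (a00 a11 - a01 a10) x - (a00 a11 p00 - a01 a10 p10)`, and likewise
`φ x = p11 - a01 a10 (p01 - p11) (x - p10) / D x`, while
`φ' x = a00 a01 a10 a11 (p00 - p10) (p01 - p11) / D x ^ 2`. Substituting, the two components of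
the derivative of `x ↦ G(x, φ x)` become `2 a00 (x - p00) (1 - K / D x ^ 3)` and
`2 a10 (x - p10) (1 - K / D x ^ 3)` with `K = a00 a01² a10 a11² (p00 - p10) (p01 - p11)²`.
As `p00 ≠ p10`, both vanish exactly when `D x ^ 3 = K`, i.e. `D x = ∛K`, and `D` is affine.
-/

noncomputable def cbrt (t : ℝ) : ℝ := if 0 ≤ t then t ^ ((1 : ℝ) / 3) else -((-t) ^ ((1 : ℝ) / 3))

lemma cbrt_pow_three (t : ℝ) : cbrt t ^ 3 = t := by
  unfold cbrt
  split_ifs with h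
  · rw [← Real.rpow_natCast, ← Real.rpow_mul h]
    norm_num
  · have h' : 0 ≤ -t := by linarith
    rw [neg_pow, ← Real.rpow_natCast ((-t) ^ ((1 : ℝ) / 3)), ← Real.rpow_mul h']
    norm_num

lemma cbrt_eq_iff {s t : ℝ} : cbrt t = s ↔ s ^ 3 = t := by
  constructor
  · rintro rfl
    exact cbrt_pow_three t
  · intro h
    apply (Odd.strictMono_pow (by decide : Odd 3)).injective
    simp only [cbrt_pow_three, h]

lemma hasDerivAt_neg_div_affine (n₁ n₀ d e : ℝ) {x : ℝ} (hx : d * x + e ≠ 0) :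
    HasDerivAt (fun s => -((n₁ * s + n₀) / (d * s + e)))
      ((n₀ * d - n₁ * e) / (d * x + e) ^ 2) x := by
  have hN : HasDerivAt (fun s => n₁ * s + n₀) n₁ x := by
    simpa using ((hasDerivAt_id x).const_mul n₁).add_const n₀
  have hD : HasDerivAt (fun s => d * s + e) d x := by
    simpa using ((hasDerivAt_id x).const_mul d).add_const e
  exact (hN.div hD hx).neg.congr_deriv (by ring)

lemma HasDerivAt.const_mul_sub_sq_add {f : ℝ → ℝ} {f' x : ℝ} (hf : HasDerivAt f f' x)
    (a b p q : ℝ) :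
    HasDerivAt (fun s => a * (s - p) ^ 2 + b * (f s - q) ^ 2)
      (2 * a * (x - p) + 2 * b * (f x - q) * f') x := by
  exact (((((hasDerivAt_id x).sub_const p).pow 2).const_mul a).add
    (((hf.sub_const q).pow 2).const_mul b)).congr_deriv (by simp only [id_eq]; ring)

lemma mul_sub_mul_eq_zero_and_iff {a c p q x E : ℝ} (ha : a ≠ 0) (hc : c ≠ 0) (hpq : p ≠ q) :
    a * (x - p) * E = 0 ∧ c * (x - q) * E = 0 ↔ E = 0 := by
  refine ⟨fun ⟨hp, hq⟩ => ?_, fun hE => by simp [hE]⟩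
  by_contra hE
  apply hpq
  have hxp : x - p = 0 := by simpa [ha, hE] using hp
  have hxq : x - q = 0 := by simpa [hc, hE] using hq
  linarith

section SingularSet

variable (a00 a01 a10 a11 p00 p01 p10 p11 : ℝ)

def singularDen (x : ℝ) : ℝ :=
  (a00 * a11 - a01 * a10) * x + (-(a00 * a11 * p00) + a01 * a10 * p10)

noncomputable def singularCurve (x : ℝ) : ℝ :=
  -(((-(a00 * a11 * p11) + a01 * a10 * p01) * x +
      (a00 * a11 * p00 * p11 - a01 * a10 * p01 * p10)) / singularDen a00 a01 a10 a11 p00 p10 x)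

def criticalCube : ℝ := a00 * a01 ^ 2 * a10 * a11 ^ 2 * (p00 - p10) * (p01 - p11) ^ 2

local notation "D" => singularDen a00 a01 a10 a11 p00 p10
local notation "φ" => singularCurve a00 a01 a10 a11 p00 p01 p10 p11
local notation "K" => criticalCube a00 a01 a10 a11 p00 p01 p10 p11

variable {a00 a01 a10 a11 p00 p01 p10 p11}

lemma singularCurve_sub_p01 {x : ℝ} (hx : D x ≠ 0) :
    φ x - p01 = -(a00 * a11 * (p01 - p11) * (x - p00)) / D x := by
  unfold singularCurve
  field_simp
  unfold singularDen
  ring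

lemma singularCurve_sub_p11 {x : ℝ} (hx : D x ≠ 0) :
    φ x - p11 = -(a01 * a10 * (p01 - p11) * (x - p10)) / D x := by
  unfold singularCurve
  field_simp
  unfold singularDen
  ring

lemma hasDerivAt_singularCurve {x : ℝ} (hx : D x ≠ 0) :
    HasDerivAt φ (a00 * a01 * a10 * a11 * (p00 - p10) * (p01 - p11) / D x ^ 2) x := by
  refine (hasDerivAt_neg_div_affine (-(a00 * a11 * p11) + a01 * a10 * p01)
    (a00 * a11 * p00 * p11 - a01 * a10 * p01 * p10) _ _ hx).congr_deriv ?_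
  unfold singularDen
  ring

lemma hasDerivAt_comp_singularCurve {x : ℝ} (hx : D x ≠ 0) :
    HasDerivAt (fun s => (a00 * (s - p00) ^ 2 + a01 * (φ s - p01) ^ 2,
        a10 * (s - p10) ^ 2 + a11 * (φ s - p11) ^ 2))
      (2 * a00 * (x - p00) * ((D x ^ 3 - K) / D x ^ 3),
        2 * a10 * (x - p10) * ((D x ^ 3 - K) / D x ^ 3)) x := by
  have hφ := hasDerivAt_singularCurve (p01 := p01) (p11 := p11) hx
  convert (hφ.const_mul_sub_sq_add a00 a01 p00 p01).prodMk
    (hφ.const_mul_sub_sq_add a10 a11 p10 p11) using 2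
  · rw [singularCurve_sub_p01 hx, criticalCube]
    field_simp
    ring
  · rw [singularCurve_sub_p11 hx, criticalCube]
    field_simp
    ring

lemma singularDen_pow_three_eq_iff (hdet : a00 * a11 - a01 * a10 ≠ 0) {x : ℝ} :
    D x ^ 3 = K ↔
      x = (cbrt K + (a00 * a11 * p00 - a01 * a10 * p10)) / (a00 * a11 - a01 * a10) := by
  rw [← cbrt_eq_iff, eq_div_iff hdet, singularDen]
  constructor <;> intro h <;> linarith

end SingularSet

theorem unique_critical_point_on_singular_set_general
    (a00 a01 a10 a11 p00 p01 p10 p11 : ℝ)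
    (h00 : a00 ≠ 0) (h10 : a10 ≠ 0)
    (hdet : a00 * a11 - a01 * a10 ≠ 0) (hp0 : p00 ≠ p10)
    (φ : ℝ → ℝ)
    (hφ : ∀ x : ℝ, φ x =
      -(((-(a00 * a11 * p11) + a01 * a10 * p01) * x +
          (a00 * a11 * p00 * p11 - a01 * a10 * p01 * p10)) /
        ((a00 * a11 - a01 * a10) * x + (-(a00 * a11 * p00) + a01 * a10 * p10)))) :
    ∀ x : ℝ, (a00 * a11 - a01 * a10) * x + (-(a00 * a11 * p00) + a01 * a10 * p10) ≠ 0 →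
      (deriv (fun s : ℝ =>
          ((a00 * (s - p00) ^ 2 + a01 * (φ s - p01) ^ 2,
            a10 * (s - p10) ^ 2 + a11 * (φ s - p11) ^ 2) : ℝ × ℝ)) x = 0 ↔
        x = (cbrt (a00 * a01 ^ 2 * a10 * a11 ^ 2 * (p00 - p10) * (p01 - p11) ^ 2) +
              (a00 * a11 * p00 - a01 * a10 * p10)) / (a00 * a11 - a01 * a10)) := by
  intro x hx
  obtain rfl : φ = singularCurve a00 a01 a10 a11 p00 p01 p10 p11 := funext hφ
  have hD : singularDen a00 a01 a10 a11 p00 p10 x ≠ 0 := hx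
  rw [(hasDerivAt_comp_singularCurve hD).deriv, Prod.mk_eq_zero,
    mul_sub_mul_eq_zero_and_iff (mul_ne_zero two_ne_zero h00) (mul_ne_zero two_ne_zero h10) hp0,
    div_eq_zero_iff, sub_eq_zero, or_iff_left (pow_ne_zero 3 hD)]
  exact singularDen_pow_three_eq_iff hdet

/-- The derivative of `x ↦ G(x, φ(x))` (on the domain of `φ`) vanishes at exactly one point,
`x̃ = (cbrt(a00a01²a10a11²(p00-p10)(p01-p11)²) + a00a11p00 - a01a10p10)/(a00a11 - a01a10)`. -/
theorem unique_critical_point_on_singular_set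
    (a00 a01 a10 a11 p00 p01 p10 p11 : ℝ)
    (h00 : a00 ≠ 0) (h01 : a01 ≠ 0) (h10 : a10 ≠ 0) (h11 : a11 ≠ 0)
    (hdet : a00 * a11 - a01 * a10 ≠ 0) (hp0 : p00 ≠ p10) (hp1 : p01 ≠ p11)
    (φ : ℝ → ℝ)
    (hφ : ∀ x : ℝ, φ x =
      -(((-(a00 * a11 * p11) + a01 * a10 * p01) * x +
          (a00 * a11 * p00 * p11 - a01 * a10 * p01 * p10)) /
        ((a00 * a11 - a01 * a10) * x + (-(a00 * a11 * p00) + a01 * a10 * p10)))) :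
    ∀ x : ℝ, (a00 * a11 - a01 * a10) * x + (-(a00 * a11 * p00) + a01 * a10 * p10) ≠ 0 →
      (deriv (fun s : ℝ =>
          ((a00 * (s - p00) ^ 2 + a01 * (φ s - p01) ^ 2,
            a10 * (s - p10) ^ 2 + a11 * (φ s - p11) ^ 2) : ℝ × ℝ)) x = 0 ↔
        x = (cbrt (a00 * a01 ^ 2 * a10 * a11 ^ 2 * (p00 - p10) * (p01 - p11) ^ 2) +
              (a00 * a11 * p00 - a01 * a10 * p10)) / (a00 * a11 - a01 * a10)) :=
  unique_critical_point_on_singular_set_general a00 a01 a10 a11 p00 p01 p10 p11 h00 h10 hdet hp0 φ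
    hφ
end

section
/- Under the stated hypotheses, the second derivative with respect to x of the composition x ↦ G(x, φ(x)) never vanishes: there is no x in the domain of φ with d²/dx² G(x, φ(x)) = (0,0). -/
/-!
The map `φ` is the Möbius transformation `t ↦ (a t + b) / (c t + d)` with `c = a00 a11 - a01 a10`
and determinant `K = a d - b c = a00 a01 a10 a11 (p00 - p10) (p01 - p11)`, so with `u = c t + d`
we have `φ' = K / u²` and `φ'' = -2 c K / u³`. The components of the second derivative are
`2 a_i0 + 2 a_i1 (φ'² + (φ - p_i1) φ'')`; the combination `a10 · first - a00 · second` kills the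
constant terms and collapses to `-6 c K² / u⁴ ≠ 0`.
-/

open Filter Topology

section Calculus

variable {𝕜 : Type*} [NontriviallyNormedField 𝕜]

theorem deriv_deriv_prodMk {E F : Type*} [NormedAddCommGroup E] [NormedSpace 𝕜 E]
    [NormedAddCommGroup F] [NormedSpace 𝕜 F] {F₁ g₁ : 𝕜 → E} {F₂ g₂ : 𝕜 → F} {x : 𝕜}
    {c₁ : E} {c₂ : F} (h₁ : ∀ᶠ t in 𝓝 x, HasDerivAt F₁ (g₁ t) t)
    (h₂ : ∀ᶠ t in 𝓝 x, HasDerivAt F₂ (g₂ t) t) (hg₁ : HasDerivAt g₁ c₁ x)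
    (hg₂ : HasDerivAt g₂ c₂ x) :
    deriv (deriv fun t => (F₁ t, F₂ t)) x = (c₁, c₂) := by
  have hderiv : deriv (fun t => (F₁ t, F₂ t)) =ᶠ[𝓝 x] fun t => (g₁ t, g₂ t) :=
    (h₁.and h₂).mono fun t ht => (ht.1.prodMk ht.2).deriv
  exact ((hg₁.prodMk hg₂).congr_of_eventuallyEq hderiv).deriv

variable {f : 𝕜 → 𝕜} {x : 𝕜}

theorem hasDerivAt_quadratic_comp (a b p q : 𝕜) {f' : 𝕜} (hf : HasDerivAt f f' x) :
    HasDerivAt (fun t => a * (t - p) ^ 2 + b * (f t - q) ^ 2)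
      (2 * a * (x - p) + 2 * b * (f x - q) * f') x := by
  refine (((((hasDerivAt_id x).sub_const p).pow 2).const_mul a).add
    (((hf.sub_const q).pow 2).const_mul b)).congr_deriv ?_
  simp only [id, Nat.cast_ofNat]
  ring

theorem hasDerivAt_quadratic_comp_deriv (a b p q : 𝕜) {f' : 𝕜 → 𝕜} {f'' : 𝕜}
    (hf : HasDerivAt f (f' x) x) (hf' : HasDerivAt f' f'' x) :
    HasDerivAt (fun t => 2 * a * (t - p) + 2 * b * (f t - q) * f' t)
      (2 * a + 2 * b * (f' x ^ 2 + (f x - q) * f'')) x := by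
  refine ((((hasDerivAt_id x).sub_const p).const_mul (2 * a)).add
    (((hf.sub_const q).const_mul (2 * b)).mul hf')).congr_deriv ?_
  ring

end Calculus

section Mobius

variable {𝕜 : Type*} [NontriviallyNormedField 𝕜]

def mobius (a b c d t : 𝕜) : 𝕜 := (a * t + b) / (c * t + d)

variable {a b c d x : 𝕜}

theorem hasDerivAt_mobius (hx : c * x + d ≠ 0) :
    HasDerivAt (mobius a b c d) ((a * d - b * c) / (c * x + d) ^ 2) x := by
  have hnum : HasDerivAt (fun t => a * t + b) a x := by
    simpa using ((hasDerivAt_id x).const_mul a).add_const b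
  have hden : HasDerivAt (fun t => c * t + d) c x := by
    simpa using ((hasDerivAt_id x).const_mul c).add_const d
  refine (hnum.div hden hx).congr_deriv ?_
  ring

theorem hasDerivAt_mobius_deriv (hx : c * x + d ≠ 0) :
    HasDerivAt (fun t => (a * d - b * c) / (c * t + d) ^ 2)
      (-2 * c * (a * d - b * c) / (c * x + d) ^ 3) x := by
  have hden : HasDerivAt (fun t => c * t + d) c x := by
    simpa using ((hasDerivAt_id x).const_mul c).add_const d
  refine ((hasDerivAt_const x (a * d - b * c)).div (hden.pow 2) (pow_ne_zero 2 hx)).congr_deriv ?_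
  simp only [Pi.pow_apply, Nat.cast_ofNat]
  field_simp
  ring

theorem eventually_hasDerivAt_mobius (hx : c * x + d ≠ 0) :
    ∀ᶠ t in 𝓝 x, HasDerivAt (mobius a b c d) ((a * d - b * c) / (c * t + d) ^ 2) t :=
  ((continuous_id.const_mul c).add_const d).continuousAt.eventually_ne hx
    |>.mono fun _ ht => hasDerivAt_mobius ht

theorem mobius_deriv_sq_add_sub_mul_deriv2 (hx : c * x + d ≠ 0) :
    c * ((a * d - b * c) / (c * x + d) ^ 2) ^ 2 +
        (c * mobius a b c d x - a) * (-2 * c * (a * d - b * c) / (c * x + d) ^ 3) =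
      3 * c * (a * d - b * c) ^ 2 / (c * x + d) ^ 4 := by
  rw [mobius]
  field_simp
  ring

end Mobius

/-- The second derivative of `x ↦ G(x, φ(x))` never vanishes on the domain of `φ`. -/
theorem second_derivative_never_vanishes
    (a00 a01 a10 a11 p00 p01 p10 p11 : ℝ)
    (h00 : a00 ≠ 0) (h01 : a01 ≠ 0) (h10 : a10 ≠ 0) (h11 : a11 ≠ 0)
    (hdet : a00 * a11 - a01 * a10 ≠ 0) (hp0 : p00 ≠ p10) (hp1 : p01 ≠ p11)
    (φ : ℝ → ℝ)
    (hφ : ∀ x : ℝ, φ x =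
      -(((-(a00 * a11 * p11) + a01 * a10 * p01) * x +
          (a00 * a11 * p00 * p11 - a01 * a10 * p01 * p10)) /
        ((a00 * a11 - a01 * a10) * x + (-(a00 * a11 * p00) + a01 * a10 * p10)))) :
    ∀ x : ℝ, (a00 * a11 - a01 * a10) * x + (-(a00 * a11 * p00) + a01 * a10 * p10) ≠ 0 →
      deriv (deriv (fun s : ℝ =>
          ((a00 * (s - p00) ^ 2 + a01 * (φ s - p01) ^ 2,
            a10 * (s - p10) ^ 2 + a11 * (φ s - p11) ^ 2) : ℝ × ℝ))) x ≠ 0 := by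
  intro x hx
  obtain rfl : φ = mobius (a00 * a11 * p11 - a01 * a10 * p01)
      (a01 * a10 * p01 * p10 - a00 * a11 * p00 * p11) (a00 * a11 - a01 * a10)
      (-(a00 * a11 * p00) + a01 * a10 * p10) :=
    funext fun t => by rw [hφ, mobius]; ring
  have hnear := eventually_hasDerivAt_mobius (a := a00 * a11 * p11 - a01 * a10 * p01)
    (b := a01 * a10 * p01 * p10 - a00 * a11 * p00 * p11) hx
  rw [deriv_deriv_prodMk (hnear.mono fun t => hasDerivAt_quadratic_comp a00 a01 p00 p01)
    (hnear.mono fun t => hasDerivAt_quadratic_comp a10 a11 p10 p11)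
    (hasDerivAt_quadratic_comp_deriv a00 a01 p00 p01 hnear.self_of_nhds
      (hasDerivAt_mobius_deriv hx))
    (hasDerivAt_quadratic_comp_deriv a10 a11 p10 p11 hnear.self_of_nhds
      (hasDerivAt_mobius_deriv hx)), Ne, Prod.mk_eq_zero]
  rintro ⟨h₁, h₂⟩
  have hK : a00 * a01 * a10 * a11 * (p00 - p10) * (p01 - p11) ≠ 0 := by
    have := sub_ne_zero.2 hp0
    have := sub_ne_zero.2 hp1
    positivity
  -- `a10 * h₁ - a00 * h₂` is `-2` times the left-hand side of `key`.
  have key := mobius_deriv_sq_add_sub_mul_deriv2 (a := a00 * a11 * p11 - a01 * a10 * p01)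
    (b := a01 * a10 * p01 * p10 - a00 * a11 * p00 * p11) hx
  refine div_ne_zero (mul_ne_zero (mul_ne_zero three_ne_zero hdet) (pow_ne_zero 2 ?_))
    (pow_ne_zero 4 hx) (key.symm.trans ?_)
  · convert hK using 1
    ring
  · linear_combination (-1 / 2 : ℝ) * a10 * h₁ + (1 / 2 : ℝ) * a00 * h₂
end

section
/- For x in the domain of φ, the first component of G(x, φ(x)) equals a00(x-p00)² + a01·(a00·a11(p01-p11))²·((x-p00)/((a00·a11-a01·a10)x + (-a00·a11·p00 + a01·a10·p10)))², and the second component equals a10(x-p10)² + a11·(a01·a10(p01-p11))²·((x-p10)/((a00·a11-a01·a10)x + (-a00·a11·p00 + a01·a10·p10)))². -/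
/-! Writing `φ x = -(N x / D x)`, the numerators `N x + p01 D x` and `N x + p11 D x` factor as
`a00 a11 (p01 - p11) (x - p00)` and `a01 a10 (p01 - p11) (x - p10)`; squaring gives both
components. -/

theorem neg_div_sub_eq_of_add_mul_eq {K : Type*} [Field K] {N D c M : K} (hD : D ≠ 0)
    (h : N + c * D = M) : -(N / D) - c = -(M / D) := by
  rw [← h]
  field_simp
  ring

theorem G_on_singular_set_formula_general
    (a00 a01 a10 a11 p00 p01 p10 p11 : ℝ)
    (φ : ℝ → ℝ)
    (hφ : ∀ x : ℝ, φ x =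
      -(((-(a00 * a11 * p11) + a01 * a10 * p01) * x +
          (a00 * a11 * p00 * p11 - a01 * a10 * p01 * p10)) /
        ((a00 * a11 - a01 * a10) * x + (-(a00 * a11 * p00) + a01 * a10 * p10)))) :
    ∀ x : ℝ, (a00 * a11 - a01 * a10) * x + (-(a00 * a11 * p00) + a01 * a10 * p10) ≠ 0 →
      a00 * (x - p00) ^ 2 + a01 * (φ x - p01) ^ 2 =
        a00 * (x - p00) ^ 2 + a01 * (a00 * a11 * (p01 - p11)) ^ 2 *
          ((x - p00) /
            ((a00 * a11 - a01 * a10) * x + (-(a00 * a11 * p00) + a01 * a10 * p10))) ^ 2 ∧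
      a10 * (x - p10) ^ 2 + a11 * (φ x - p11) ^ 2 =
        a10 * (x - p10) ^ 2 + a11 * (a01 * a10 * (p01 - p11)) ^ 2 *
          ((x - p10) /
            ((a00 * a11 - a01 * a10) * x + (-(a00 * a11 * p00) + a01 * a10 * p10))) ^ 2 := by
  intro x hD
  have hφ₀ : φ x - p01 = -(a00 * a11 * (p01 - p11) * (x - p00) /
      ((a00 * a11 - a01 * a10) * x + (-(a00 * a11 * p00) + a01 * a10 * p10))) := by
    rw [hφ]
    exact neg_div_sub_eq_of_add_mul_eq hD (by ring)
  have hφ₁ : φ x - p11 = -(a01 * a10 * (p01 - p11) * (x - p10) /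
      ((a00 * a11 - a01 * a10) * x + (-(a00 * a11 * p00) + a01 * a10 * p10))) := by
    rw [hφ]
    exact neg_div_sub_eq_of_add_mul_eq hD (by ring)
  rw [hφ₀, hφ₁]
  constructor <;> ring

/-- Explicit formula for `G(x, φ(x))` on the domain of `φ`. -/
theorem G_on_singular_set_formula
    (a00 a01 a10 a11 p00 p01 p10 p11 : ℝ)
    (h00 : a00 ≠ 0) (h01 : a01 ≠ 0) (h10 : a10 ≠ 0) (h11 : a11 ≠ 0)
    (hdet : a00 * a11 - a01 * a10 ≠ 0) (hp0 : p00 ≠ p10) (hp1 : p01 ≠ p11)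
    (φ : ℝ → ℝ)
    (hφ : ∀ x : ℝ, φ x =
      -(((-(a00 * a11 * p11) + a01 * a10 * p01) * x +
          (a00 * a11 * p00 * p11 - a01 * a10 * p01 * p10)) /
        ((a00 * a11 - a01 * a10) * x + (-(a00 * a11 * p00) + a01 * a10 * p10)))) :
    ∀ x : ℝ, (a00 * a11 - a01 * a10) * x + (-(a00 * a11 * p00) + a01 * a10 * p10) ≠ 0 →
      a00 * (x - p00) ^ 2 + a01 * (φ x - p01) ^ 2 =
        a00 * (x - p00) ^ 2 + a01 * (a00 * a11 * (p01 - p11)) ^ 2 *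
          ((x - p00) /
            ((a00 * a11 - a01 * a10) * x + (-(a00 * a11 * p00) + a01 * a10 * p10))) ^ 2 ∧
      a10 * (x - p10) ^ 2 + a11 * (φ x - p11) ^ 2 =
        a10 * (x - p10) ^ 2 + a11 * (a01 * a10 * (p01 - p11)) ^ 2 *
          ((x - p10) /
            ((a00 * a11 - a01 * a10) * x + (-(a00 * a11 * p00) + a01 * a10 * p10))) ^ 2 :=
  G_on_singular_set_formula_general a00 a01 a10 a11 p00 p01 p10 p11 φ hφ
end

section
/- If q0 ≠ 0 and q1 ≠ 0 and a ≠ b are positive reals, then the restriction of F_q(x,y) = ((x-q0)² + (y-q1)², ax² + by²) to its singular set S(F_q) = {(x,y) : det JF_q(x,y) = 0} is injective. -/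
/-!
Write `s = x - x'`, `t = y - y'` for two points with the same image. Equality of the images
gives `(b - a) s (x + x') = 2 b (q0 s + q1 t)` and `(b - a) t (y + y') = -2 a (q0 s + q1 t)`;
feeding these into the sum of the two singularity equations yields `(b - a)² (s t)² = 0`.
So one coordinate agrees; then the two components of `F_q` combine to `2 b q1 t = 0`
(or `2 a q0 s = 0`), which settles the other one.
-/

namespace Fq

variable (a b q0 q1 : ℝ)

def map (p : ℝ × ℝ) : ℝ × ℝ :=
  ((p.1 - q0) ^ 2 + (p.2 - q1) ^ 2, a * p.1 ^ 2 + b * p.2 ^ 2)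

def singularSet : Set (ℝ × ℝ) :=
  {p | 4 * ((p.1 - q0) * (b * p.2) - (p.2 - q1) * (a * p.1)) = 0}

variable {a b q0 q1}

theorem sub_mul_sub_eq_zero_of_map_eq (hab : a ≠ b) {p p' : ℝ × ℝ}
    (hp : p ∈ singularSet a b q0 q1) (hp' : p' ∈ singularSet a b q0 q1)
    (h : map a b q0 q1 p = map a b q0 q1 p') :
    (p.1 - p'.1) * (p.2 - p'.2) = 0 := by
  obtain ⟨x, y⟩ := p
  obtain ⟨x', y'⟩ := p'
  simp only [singularSet, Set.mem_ofPred_eq] at hp hp'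
  obtain ⟨h₁, h₂⟩ := Prod.mk.inj h
  set L := q0 * (x - x') + q1 * (y - y')
  have hx : (b - a) * (x - x') * (x + x') = 2 * b * L := by linear_combination b * h₁ - h₂
  have hy : (b - a) * (y - y') * (y + y') = -2 * a * L := by linear_combination h₂ - a * h₁
  have key : (b - a) ^ 2 * ((x - x') * (y - y')) ^ 2 = 0 := by
    linear_combination (b - a) * (x - x') * (y - y') / 2 * (hp + hp')
      - (b - a) * (y - y') * (y + y') * hx - 2 * b * L * hy
      - 2 * a * q1 * (y - y') * hx + 2 * b * q0 * (x - x') * hy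
  have hba : (b - a) ^ 2 ≠ 0 := pow_ne_zero 2 (sub_ne_zero.mpr hab.symm)
  exact pow_eq_zero_iff two_ne_zero |>.mp ((mul_eq_zero.mp key).resolve_left hba)

theorem eq_of_map_eq_of_fst_eq (hb : b ≠ 0) (hq1 : q1 ≠ 0) {p p' : ℝ × ℝ}
    (h : map a b q0 q1 p = map a b q0 q1 p') (hx : p.1 = p'.1) : p = p' := by
  obtain ⟨h₁, h₂⟩ := Prod.mk.inj h
  have : (2 * b * q1) * (p.2 - p'.2) = 0 := by
    rw [hx] at h₁ h₂
    linear_combination h₂ - b * h₁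
  have hc : 2 * b * q1 ≠ 0 := mul_ne_zero (mul_ne_zero two_ne_zero hb) hq1
  exact Prod.ext hx (sub_eq_zero.mp ((mul_eq_zero.mp this).resolve_left hc))

theorem eq_of_map_eq_of_snd_eq (ha : a ≠ 0) (hq0 : q0 ≠ 0) {p p' : ℝ × ℝ}
    (h : map a b q0 q1 p = map a b q0 q1 p') (hy : p.2 = p'.2) : p = p' := by
  obtain ⟨h₁, h₂⟩ := Prod.mk.inj h
  have : (2 * a * q0) * (p.1 - p'.1) = 0 := by
    rw [hy] at h₁ h₂
    linear_combination h₂ - a * h₁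
  have hc : 2 * a * q0 ≠ 0 := mul_ne_zero (mul_ne_zero two_ne_zero ha) hq0
  exact Prod.ext (sub_eq_zero.mp ((mul_eq_zero.mp this).resolve_left hc)) hy

theorem injOn_singularSet (ha : a ≠ 0) (hb : b ≠ 0) (hab : a ≠ b) (hq0 : q0 ≠ 0)
    (hq1 : q1 ≠ 0) : Set.InjOn (map a b q0 q1) (singularSet a b q0 q1) := by
  intro p hp p' hp' h
  rcases mul_eq_zero.mp (sub_mul_sub_eq_zero_of_map_eq hab hp hp' h) with hx | hy
  · exact eq_of_map_eq_of_fst_eq hb hq1 h (sub_eq_zero.mp hx)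
  · exact eq_of_map_eq_of_snd_eq ha hq0 h (sub_eq_zero.mp hy)

end Fq

/-- For `a ≠ b` positive and `q0, q1 ≠ 0`, the restriction of
`F_q(x,y) = ((x-q0)² + (y-q1)², ax² + by²)` to its singular set
`{(x,y) : 4((x-q0)by - (y-q1)ax) = 0}` is injective. -/
theorem Fq_injective_on_singular_set
    (a b q0 q1 : ℝ) (ha : 0 < a) (hb : 0 < b) (hab : a ≠ b)
    (hq0 : q0 ≠ 0) (hq1 : q1 ≠ 0) :
    Set.InjOn
      (fun p : ℝ × ℝ =>
        (((p.1 - q0) ^ 2 + (p.2 - q1) ^ 2, a * p.1 ^ 2 + b * p.2 ^ 2) : ℝ × ℝ))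
      {p : ℝ × ℝ | 4 * ((p.1 - q0) * (b * p.2) - (p.2 - q1) * (a * p.1)) = 0} :=
  Fq.injOn_singularSet ha.ne' hb.ne' hab hq0 hq1
end

section
/- Any two maps of the form (x,y) ↦ (x² + b00·x + b01·y, y² + b10·x + b11·y) and (x,y) ↦ (x² + b̃00·x + b̃01·y, y² + b̃10·x + b̃11·y), with all eight coefficients nonzero, are A-equivalent via affine diffeomorphisms: there exist an affine diffeomorphism h of the source of the form h(x,y) = (β00·x + β01, β10·y + β11) with β00·β10 ≠ 0 and an affine diffeomorphism H of the target (a diagonal linear scaling composed with a translation) such that the second map equals H composed with the first map composed with h. -/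
/-!
Substituting `x ↦ a x + p`, `y ↦ d y + q` into the normal form and rescaling the two target
coordinates by `a⁻²` and `d⁻²` again gives a normal form, with coefficients
`((2p + b00)/a, b01 d/a², b10 a/d², (2q + b11)/d)` up to a translation. The diagonal coefficients
are matched by choosing the shifts `p`, `q`; the off-diagonal ones force `d = b̃01 a²/b01` and
then `a³ = b10 b01² / (b̃10 b̃01²)`, which is solvable since odd powers are onto `ℝ`.
-/

theorem exists_pow_eq_of_odd {n : ℕ} (hn : Odd n) (K : ℝ) : ∃ c : ℝ, c ^ n = K := by
  have hn0 : n ≠ 0 := by rintro rfl; exact Nat.not_odd_zero hn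
  rcases le_total 0 K with hK | hK
  · exact ⟨K ^ (n⁻¹ : ℝ), Real.rpow_inv_natCast_pow hK hn0⟩
  · refine ⟨-(-K) ^ (n⁻¹ : ℝ), ?_⟩
    rw [hn.neg_pow, Real.rpow_inv_natCast_pow (neg_nonneg.mpr hK) hn0, neg_neg]

theorem exists_shift_div_eq (α β : ℝ) {a : ℝ} (ha : a ≠ 0) : ∃ p : ℝ, (2 * p + α) / a = β :=
  ⟨(β * a - α) / 2, by field_simp; ring⟩

theorem exists_scaling_eq {b01 b10 tb01 tb10 : ℝ} (h01 : b01 ≠ 0) (h10 : b10 ≠ 0)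
    (ht01 : tb01 ≠ 0) (ht10 : tb10 ≠ 0) :
    ∃ a d : ℝ, a ≠ 0 ∧ d ≠ 0 ∧ b01 * d / a ^ 2 = tb01 ∧ b10 * a / d ^ 2 = tb10 := by
  obtain ⟨a, ha⟩ := exists_pow_eq_of_odd (by decide : Odd 3) (b10 * b01 ^ 2 / (tb10 * tb01 ^ 2))
  have hcube : a ^ 3 * (tb10 * tb01 ^ 2) = b10 * b01 ^ 2 := by
    rw [ha]; field_simp
  have ha0 : a ≠ 0 := by
    rintro rfl
    exact mul_ne_zero h10 (pow_ne_zero 2 h01) (by simpa using hcube.symm)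
  refine ⟨a, tb01 * a ^ 2 / b01, ha0, by positivity, by field_simp, ?_⟩
  field_simp
  linear_combination hcube.symm

theorem sq_add_affine_substitution (α γ a p d q x y : ℝ) (ha : a ≠ 0) :
    x ^ 2 + (2 * p + α) / a * x + γ * d / a ^ 2 * y =
      (a ^ 2)⁻¹ * ((a * x + p) ^ 2 + α * (a * x + p) + γ * (d * y + q)) +
        -(a ^ 2)⁻¹ * (p ^ 2 + α * p + γ * q) := by
  field_simp
  ring

theorem quadratic_normal_forms_affinely_equivalent_general
    (b00 b01 b10 b11 tb00 tb01 tb10 tb11 : ℝ)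
    (h1 : b01 ≠ 0) (h2 : b10 ≠ 0) (h5 : tb01 ≠ 0) (h6 : tb10 ≠ 0) :
    ∃ β00 β01 β10 β11 s0 s1 t0 t1 : ℝ,
      β00 ≠ 0 ∧ β10 ≠ 0 ∧ s0 ≠ 0 ∧ s1 ≠ 0 ∧
      ∀ x y : ℝ,
        ((x ^ 2 + tb00 * x + tb01 * y, y ^ 2 + tb10 * x + tb11 * y) : ℝ × ℝ) =
        (s0 * ((β00 * x + β01) ^ 2 + b00 * (β00 * x + β01) + b01 * (β10 * y + β11)) + t0,
         s1 * ((β10 * y + β11) ^ 2 + b10 * (β00 * x + β01) + b11 * (β10 * y + β11)) + t1) := by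
  obtain ⟨a, d, ha, hd, rfl, rfl⟩ := exists_scaling_eq h1 h2 h5 h6
  obtain ⟨p, rfl⟩ := exists_shift_div_eq b00 tb00 ha
  obtain ⟨q, rfl⟩ := exists_shift_div_eq b11 tb11 hd
  refine ⟨a, p, d, q, (a ^ 2)⁻¹, (d ^ 2)⁻¹, -(a ^ 2)⁻¹ * (p ^ 2 + b00 * p + b01 * q),
    -(d ^ 2)⁻¹ * (q ^ 2 + b11 * q + b10 * p), ha, hd, by positivity, by positivity,
    fun x y => Prod.ext ?_ ?_⟩
  · linear_combination sq_add_affine_substitution b00 b01 a p d q x y ha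
  · linear_combination sq_add_affine_substitution b11 b10 d q a p y x hd

/-- Any two maps `(x,y) ↦ (x² + b00x + b01y, y² + b10x + b11y)` and
`(x,y) ↦ (x² + b̃00x + b̃01y, y² + b̃10x + b̃11y)` with all eight coefficients nonzero are
A-equivalent via affine diffeomorphisms: a source change `h(x,y) = (β00x + β01, β10y + β11)`
with `β00β10 ≠ 0` and a target change which is a diagonal linear scaling followed by a
translation. -/
theorem quadratic_normal_forms_affinely_equivalent
    (b00 b01 b10 b11 tb00 tb01 tb10 tb11 : ℝ)
    (h0 : b00 ≠ 0) (h1 : b01 ≠ 0) (h2 : b10 ≠ 0) (h3 : b11 ≠ 0)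
    (h4 : tb00 ≠ 0) (h5 : tb01 ≠ 0) (h6 : tb10 ≠ 0) (h7 : tb11 ≠ 0) :
    ∃ β00 β01 β10 β11 s0 s1 t0 t1 : ℝ,
      β00 ≠ 0 ∧ β10 ≠ 0 ∧ s0 ≠ 0 ∧ s1 ≠ 0 ∧
      ∀ x y : ℝ,
        ((x ^ 2 + tb00 * x + tb01 * y, y ^ 2 + tb10 * x + tb11 * y) : ℝ × ℝ) =
        (s0 * ((β00 * x + β01) ^ 2 + b00 * (β00 * x + β01) + b01 * (β10 * y + β11)) + t0,
         s1 * ((β10 * y + β11) ^ 2 + b10 * (β00 * x + β01) + b11 * (β10 * y + β11)) + t1) :=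
  quadratic_normal_forms_affinely_equivalent_general b00 b01 b10 b11 tb00 tb01 tb10 tb11 h1 h2 h5 h6
end

section
/- Let α: I → ℝ² be a smooth unit-speed plane curve and q ∈ ℝ², and f_q(s) = ‖α(s) - q‖². Then f_q'(s0) = f_q''(s0) = f_q'''(s0) = 0 if and only if k(s0) ≠ 0, q = α(s0) + n(s0)/k(s0), and k'(s0) = 0. -/
/-- For a smooth unit-speed plane curve `α` on an open interval with curvature `k`
(`t' = k·n`, `n = t` rotated by `π/2`) and `f_q(s) = ‖α(s) - q‖²`:
`f_q'(s0) = f_q''(s0) = f_q'''(s0) = 0` iff `k(s0) ≠ 0`, `q = α(s0) + n(s0)/k(s0)` and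
`k'(s0) = 0`. -/
theorem distance_squared_triple_degenerate_iff_vertex
    (A B : ℝ) (α : ℝ → ℝ × ℝ) (k : ℝ → ℝ) (q : ℝ × ℝ) (s0 : ℝ)
    (hs0 : s0 ∈ Set.Ioo A B)
    (hα : ContDiff ℝ (⊤ : ℕ∞) α) (hk : ContDiff ℝ (⊤ : ℕ∞) k)
    (hunit : ∀ s ∈ Set.Ioo A B, ((deriv α s).1) ^ 2 + ((deriv α s).2) ^ 2 = 1)
    (hfrenet : ∀ s ∈ Set.Ioo A B,
      deriv (deriv α) s = k s • ((-(deriv α s).2, (deriv α s).1) : ℝ × ℝ)) :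
    (deriv (fun s => ((α s).1 - q.1) ^ 2 + ((α s).2 - q.2) ^ 2) s0 = 0 ∧
     deriv (deriv (fun s => ((α s).1 - q.1) ^ 2 + ((α s).2 - q.2) ^ 2)) s0 = 0 ∧
     deriv (deriv (deriv (fun s => ((α s).1 - q.1) ^ 2 + ((α s).2 - q.2) ^ 2))) s0 = 0) ↔
    (k s0 ≠ 0 ∧ q = α s0 + (k s0)⁻¹ • ((-(deriv α s0).2, (deriv α s0).1) : ℝ × ℝ) ∧
      deriv k s0 = 0) := by
  have hmem : Set.Ioo A B ∈ nhds s0 := Ioo_mem_nhds hs0.1 hs0.2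
  have hαd : Differentiable ℝ α := hα.differentiable (by simp)
  have hα' : ContDiff ℝ ((⊤ : ℕ∞) : WithTop ℕ∞) α := hα.of_le (by simp)
  have ht : ContDiff ℝ ((⊤ : ℕ∞) : WithTop ℕ∞) (deriv α) :=
    (contDiff_infty_iff_deriv.mp hα').2
  have htd : Differentiable ℝ (deriv α) := ht.differentiable (by simp)
  have hkd : Differentiable ℝ k := hk.differentiable (by simp)
  set f : ℝ → ℝ := fun s => ((α s).1 - q.1) ^ 2 + ((α s).2 - q.2) ^ 2 with hfdef
  set f1 : ℝ → ℝ := fun s =>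
    2 * (((α s).1 - q.1) * (deriv α s).1 + ((α s).2 - q.2) * (deriv α s).2) with hf1def
  have Hf1 : ∀ s, HasDerivAt f (f1 s) s := by
    intro s
    have h1 : HasDerivAt (fun s => (α s).1) (deriv α s).1 s := ((hαd s).hasDerivAt).fst
    have h2 : HasDerivAt (fun s => (α s).2) (deriv α s).2 s := ((hαd s).hasDerivAt).snd
    have H := ((h1.sub_const q.1).pow 2).add ((h2.sub_const q.2).pow 2)
    refine H.congr_deriv ?_
    ring
  have hdf : deriv f = f1 := funext fun s => (Hf1 s).deriv
  set f2 : ℝ → ℝ := fun s =>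
    2 * ((deriv α s).1 * (deriv α s).1 + (deriv α s).2 * (deriv α s).2
      + ((α s).1 - q.1) * (deriv (deriv α) s).1
      + ((α s).2 - q.2) * (deriv (deriv α) s).2) with hf2def
  have Hf2 : ∀ s, HasDerivAt f1 (f2 s) s := by
    intro s
    have h1 : HasDerivAt (fun s => (α s).1) (deriv α s).1 s := ((hαd s).hasDerivAt).fst
    have h2 : HasDerivAt (fun s => (α s).2) (deriv α s).2 s := ((hαd s).hasDerivAt).snd
    have g1 : HasDerivAt (fun s => (deriv α s).1) (deriv (deriv α) s).1 s :=
      ((htd s).hasDerivAt).fst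
    have g2 : HasDerivAt (fun s => (deriv α s).2) (deriv (deriv α) s).2 s :=
      ((htd s).hasDerivAt).snd
    have H := (((h1.sub_const q.1).mul g1).add ((h2.sub_const q.2).mul g2)).const_mul 2
    refine H.congr_deriv ?_
    ring
  have hdf1 : deriv f1 = f2 := funext fun s => (Hf2 s).deriv
  set g : ℝ → ℝ := fun s =>
    2 * (1 + k s * (-((α s).1 - q.1) * (deriv α s).2 + ((α s).2 - q.2) * (deriv α s).1))
    with hgdef
  have hfg : ∀ s ∈ Set.Ioo A B, f2 s = g s := by
    intro s hs
    have hu := hunit s hs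
    have hfr := hfrenet s hs
    simp only [hf2def, hgdef, hfr, Prod.smul_fst, Prod.smul_snd, smul_eq_mul]
    linear_combination 2 * hu
  -- abbreviations at s0
  set t1 := (deriv α s0).1 with ht1
  set t2 := (deriv α s0).2 with ht2
  set a1 := (α s0).1 - q.1 with ha1
  set a2 := (α s0).2 - q.2 with ha2
  have hu0 : t1 ^ 2 + t2 ^ 2 = 1 := hunit s0 hs0
  have hfr0 := hfrenet s0 hs0
  have e1 : (deriv (deriv α) s0).1 = k s0 * (-t2) := by rw [hfr0]; simp [ht2]
  have e2 : (deriv (deriv α) s0).2 = k s0 * t1 := by rw [hfr0]; simp [ht1]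
  -- first derivative at s0
  have D1 : deriv f s0 = 2 * (a1 * t1 + a2 * t2) := by rw [hdf]
  -- second derivative at s0
  have D2 : deriv (deriv f) s0 = 2 * (1 + k s0 * (-a1 * t2 + a2 * t1)) := by
    rw [hdf, hdf1, hfg s0 hs0]
  -- third derivative at s0
  have Hg : HasDerivAt g
      (2 * (deriv k s0 * (-a1 * t2 + a2 * t1)
        + k s0 * (-(k s0) * (a1 * t1 + a2 * t2)))) s0 := by
    have h1 : HasDerivAt (fun s => (α s).1) t1 s0 := ((hαd s0).hasDerivAt).fst
    have h2 : HasDerivAt (fun s => (α s).2) t2 s0 := ((hαd s0).hasDerivAt).snd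
    have g1 : HasDerivAt (fun s => (deriv α s).1) (deriv (deriv α) s0).1 s0 :=
      ((htd s0).hasDerivAt).fst
    have g2 : HasDerivAt (fun s => (deriv α s).2) (deriv (deriv α) s0).2 s0 :=
      ((htd s0).hasDerivAt).snd
    have hK : HasDerivAt k (deriv k s0) s0 := (hkd s0).hasDerivAt
    have hM : HasDerivAt
        (fun s => -((α s).1 - q.1) * (deriv α s).2 + ((α s).2 - q.2) * (deriv α s).1)
        ((-t1) * t2 + (-a1) * (deriv (deriv α) s0).2
          + (t2 * t1 + a2 * (deriv (deriv α) s0).1)) s0 := by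
      have H := (((h1.sub_const q.1).neg.mul g2).add ((h2.sub_const q.2).mul g1))
      refine H.congr_deriv ?_
      rfl
    have H := ((hK.mul hM).const_add 1).const_mul 2
    refine H.congr_deriv ?_
    rw [e1, e2]
    ring
  have D3 : deriv (deriv (deriv f)) s0
      = 2 * (deriv k s0 * (-a1 * t2 + a2 * t1)
        + k s0 * (-(k s0) * (a1 * t1 + a2 * t2))) := by
    rw [hdf, hdf1]
    have : deriv f2 s0 = deriv g s0 :=
      (Filter.eventuallyEq_of_mem hmem hfg).deriv_eq
    rw [this, Hg.deriv]
  rw [D1, D2, D3]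
  constructor
  · rintro ⟨h1, h2, h3⟩
    have hp : a1 * t1 + a2 * t2 = 0 := by linarith
    have hkm : k s0 * (-a1 * t2 + a2 * t1) = -1 := by linarith
    have hk0 : k s0 ≠ 0 := by
      intro h
      rw [h] at hkm
      norm_num at hkm
    have hm0 : (-a1 * t2 + a2 * t1) ≠ 0 := by
      intro h
      rw [h] at hkm
      norm_num at hkm
    have hk' : deriv k s0 = 0 := by
      have : deriv k s0 * (-a1 * t2 + a2 * t1) = 0 := by
        rw [hp] at h3
        nlinarith [h3]
      exact (mul_eq_zero.mp this).resolve_right hm0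
    refine ⟨hk0, ?_, hk'⟩
    have hq1 : q.1 = (α s0).1 + (k s0)⁻¹ * (-t2) := by
      field_simp
      linear_combination (-(k s0 * t1) / 2) * h1 + (t2 / 2) * h2 + (k s0 * a1) * hu0
    have hq2 : q.2 = (α s0).2 + (k s0)⁻¹ * t1 := by
      field_simp
      linear_combination (-(k s0 * t2) / 2) * h1 - (t1 / 2) * h2 + (k s0 * a2) * hu0
    apply Prod.ext <;> simp [hq1, hq2]
  · rintro ⟨hk0, hq, hk'⟩
    have hq1 : q.1 = (α s0).1 + (k s0)⁻¹ * (-t2) := by rw [hq]; simp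
    have hq2 : q.2 = (α s0).2 + (k s0)⁻¹ * t1 := by rw [hq]; simp
    have ha1' : a1 = (k s0)⁻¹ * t2 := by rw [ha1, hq1]; ring
    have ha2' : a2 = -((k s0)⁻¹ * t1) := by rw [ha2, hq2]; ring
    have hp : a1 * t1 + a2 * t2 = 0 := by rw [ha1', ha2']; ring
    have hm : -a1 * t2 + a2 * t1 = -(k s0)⁻¹ := by
      rw [ha1', ha2']
      linear_combination (-(k s0)⁻¹) * hu0
    refine ⟨by rw [hp]; ring, ?_, ?_⟩
    · rw [hm]; field_simp; norm_num
    · rw [hp, hm, hk']; ring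
end
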